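/- arXiv:1904.09451 — 7 statements merged into one kernel-verified Lean document; each statement's English description precedes it below -/
import Mathlib

section
/- Let Ω be a finite abelian group of order d endowed with a nondegenerate symmetric bicharacter ⟨·,·⟩, and let {φ_x : x∈Ω}, {ψ_y : y∈Ω} be two Fourier conjugate mutually unbiased bases of a d-dimensional complex Hilbert space H. Then −1 is not an eigenvalue of the Haagerup matrix Λ if and only if d is odd. -/
/-!
Since `⟨φ_x, ψ_y⟩ = β x y / √d`, the entry `Λ_{(x,y),(z,t)}` equals `d⁻¹ Re β (z - x) (t - y)`:
it depends only on the difference of the indices, so `Λ` is a convolution operator on `Ω × Ω`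
and every character `(p, q) ↦ β u p * β v q` is an eigenvector of it, with eigenvalue
`Re β u v` (a double character sum). Nondegeneracy makes these `d²` characters distinct, hence
an eigenbasis, and `charpoly Λ = ∏ (X - Re β u v)`. As `|β u v| = 1`, `-1` is an eigenvalue iff
`β u v = -1` for some `u, v`. This is impossible for odd `d`, because `β u v ^ d = β (d • u) v = 1`;
for even `d`, take `u` of order two and `v` with `β u v ≠ 1`: then `β u v ^ 2 = 1` forces `-1`.
-/

open scoped InnerProductSpace

noncomputable section

/-- The Haagerup matrix of a pair of bases, with entries
`Λ_{(x,y),(z,t)} = d·Re[⟨ψ_y, φ_z⟩⟨φ_z, ψ_t⟩⟨ψ_t, φ_x⟩⟨φ_x, ψ_y⟩]`. -/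
def haagerup {Ω H : Type*} [NormedAddCommGroup H] [InnerProductSpace ℂ H]
    (d : ℕ) (φ ψ : Ω → H) : Matrix (Ω × Ω) (Ω × Ω) ℝ := fun p q =>
  (d : ℝ) * (⟪ψ p.2, φ q.1⟫_ℂ * ⟪φ q.1, ψ q.2⟫_ℂ * ⟪ψ q.2, φ p.1⟫_ℂ * ⟪φ p.1, ψ p.2⟫_ℂ).re

open Polynomial Matrix ComplexConjugate

namespace Matrix

variable {n K : Type*} [Fintype n] [DecidableEq n] [Field K]

theorem charpoly_eq_prod_of_linearIndependent_eigenvectors {M : Matrix n n K} {v : n → n → K}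
    {μ : n → K} (hv : LinearIndependent K v) (hM : ∀ i, M *ᵥ v i = μ i • v i) :
    M.charpoly = ∏ i, (X - C (μ i)) := by
  set P : Matrix n n K := of fun p i => v i p
  have hP : IsUnit P.det := by
    rw [← isUnit_iff_isUnit_det, ← linearIndependent_cols_iff_isUnit]
    exact hv
  have hMP : M * P = P * diagonal μ := by
    ext p i
    simpa [P, mul_apply, mulVec, dotProduct, diagonal_apply, mul_comm] using congrFun (hM i) p
  have hM' : M = P * (diagonal μ * P⁻¹) := by
    rw [← mul_assoc, ← hMP, mul_assoc, mul_nonsing_inv _ hP, mul_one]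
  rw [hM', charpoly_mul_comm, mul_assoc, nonsing_inv_mul _ hP, mul_one, charpoly_diagonal]

theorem mulVec_addChar_eq_smul {G R : Type*} [AddCommGroup G] [Fintype G] [CommRing R]
    {M : Matrix G G R} {f : G → R} (hM : ∀ p q, M p q = f (q - p)) (ψ : AddChar G R) :
    M *ᵥ ψ = (∑ a, f a * ψ a) • ⇑ψ := by
  ext p
  simp only [mulVec, dotProduct, hM, Pi.smul_apply, smul_eq_mul, Finset.sum_mul]
  exact Fintype.sum_equiv (Equiv.subRight p) _ _ fun q => by
    simp [← AddChar.map_add_eq_mul, mul_assoc]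

end Matrix

structure IsSymmBicharacter {Ω : Type*} [AddCommGroup Ω] (β : Ω → Ω → ℂ) : Prop where
  norm_eq_one : ∀ x y, ‖β x y‖ = 1
  symm : ∀ x y, β x y = β y x
  map_add_left : ∀ x₁ x₂ y, β (x₁ + x₂) y = β x₁ y * β x₂ y

namespace IsSymmBicharacter

variable {Ω : Type*} [AddCommGroup Ω] {β : Ω → Ω → ℂ} (hβ : IsSymmBicharacter β)
include hβ

lemma ne_zero (x y : Ω) : β x y ≠ 0 :=
  fun h => by simpa [h] using hβ.norm_eq_one x y

lemma map_add_right (x y₁ y₂ : Ω) : β x (y₁ + y₂) = β x y₁ * β x y₂ := by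
  rw [hβ.symm, hβ.map_add_left, hβ.symm y₁, hβ.symm y₂]

lemma map_zero_right (x : Ω) : β x 0 = 1 := by
  have h := hβ.map_add_right x 0 0
  rw [add_zero] at h
  exact (mul_eq_left₀ (hβ.ne_zero x 0)).1 h.symm

def toAddChar (x : Ω) : AddChar Ω ℂ where
  toFun := β x
  map_zero_eq_one' := hβ.map_zero_right x
  map_add_eq_mul' := hβ.map_add_right x

lemma toAddChar_apply (x y : Ω) : hβ.toAddChar x y = β x y := rfl

lemma map_neg_right (x y : Ω) : β x (-y) = conj (β x y) := by
  rw [← hβ.toAddChar_apply, AddChar.map_neg_eq_inv, hβ.toAddChar_apply,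
    Complex.inv_eq_conj (hβ.norm_eq_one x y)]

lemma map_neg_left (x y : Ω) : β (-x) y = conj (β x y) := by
  rw [hβ.symm, hβ.map_neg_right, hβ.symm]

lemma map_nsmul_left (n : ℕ) (x y : Ω) : β (n • x) y = β x y ^ n := by
  rw [hβ.symm, ← hβ.toAddChar_apply, AddChar.map_nsmul_eq_pow, hβ.toAddChar_apply, hβ.symm]

lemma map_sub_sub (x x' y y' : Ω) :
    β (x - x') (y - y') = β x y * conj (β x y') * conj (β x' y) * β x' y' := by
  simp only [sub_eq_add_neg, hβ.map_add_left, hβ.map_add_right, hβ.map_neg_left,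
    hβ.map_neg_right, Complex.conj_conj]
  ring

lemma re_eq_neg_one_iff (x y : Ω) : (β x y).re = -1 ↔ β x y = -1 := by
  refine ⟨fun h => Complex.ext h ?_, fun h => by simp [h]⟩
  have hnorm := Complex.sq_norm (β x y)
  rw [hβ.norm_eq_one, Complex.normSq_apply, h] at hnorm
  simpa using hnorm

def pairChar (u : Ω × Ω) : AddChar (Ω × Ω) ℂ where
  toFun p := β u.1 p.1 * β u.2 p.2
  map_zero_eq_one' := by simp [hβ.map_zero_right]
  map_add_eq_mul' p q := by simp only [Prod.fst_add, Prod.snd_add, hβ.map_add_right]; ring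

lemma pairChar_apply (u p : Ω × Ω) : hβ.pairChar u p = β u.1 p.1 * β u.2 p.2 := rfl

lemma conj_pairChar (u p : Ω × Ω) : conj (hβ.pairChar u p) = hβ.pairChar (-u) p := by
  simp [pairChar_apply, hβ.map_neg_left]

section Nondegenerate

variable (hnd : ∀ x, (∀ y, β x y = 1) → x = 0)
include hnd

lemma eq_of_forall_apply_eq {x x' : Ω} (h : ∀ y, β x y = β x' y) : x = x' := by
  refine sub_eq_zero.1 (hnd _ fun y => ?_)
  rw [sub_eq_add_neg, hβ.map_add_left, hβ.map_neg_left, h, Complex.mul_conj,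
    Complex.normSq_eq_norm_sq, hβ.norm_eq_one]
  simp

lemma pairChar_injective : Function.Injective hβ.pairChar := by
  intro u u' h
  have h' := fun p => DFunLike.congr_fun h p
  simp only [pairChar_apply] at h'
  ext
  · exact hβ.eq_of_forall_apply_eq hnd fun y => by simpa [hβ.map_zero_right] using h' (y, 0)
  · exact hβ.eq_of_forall_apply_eq hnd fun y => by simpa [hβ.map_zero_right] using h' (0, y)

variable [Fintype Ω]

lemma exists_eq_neg_one_iff_even : (∃ x y, β x y = -1) ↔ Even (Fintype.card Ω) := by
  constructor
  · rintro ⟨x, y, h⟩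
    have hpow := hβ.map_nsmul_left (Fintype.card Ω) x y
    rw [card_nsmul_eq_zero, hβ.symm, hβ.map_zero_right, h] at hpow
    exact (neg_one_pow_eq_one_iff_even (by norm_num)).1 hpow.symm
  · intro heven
    have : Fact (Nat.Prime 2) := ⟨Nat.prime_two⟩
    obtain ⟨x, hx⟩ := exists_prime_addOrderOf_dvd_card 2 heven.two_dvd
    obtain ⟨y, hy⟩ : ∃ y, β x y ≠ 1 := by
      by_contra! h
      simp [hnd x h] at hx
    have hsq : β x y ^ 2 = 1 := by
      rw [← hβ.map_nsmul_left, ← hx, addOrderOf_nsmul_eq_zero, hβ.symm, hβ.map_zero_right]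
    exact ⟨x, y, (sq_eq_one_iff.1 hsq).resolve_left hy⟩

lemma sum_apply_right [DecidableEq Ω] (x : Ω) :
    ∑ y, β x y = if x = 0 then (Fintype.card Ω : ℂ) else 0 := by
  have hchar : hβ.toAddChar x = 0 ↔ x = 0 :=
    ⟨fun h => hnd x fun y => DFunLike.congr_fun h y,
      by rintro rfl; ext y; exact (hβ.symm 0 y).trans (hβ.map_zero_right y)⟩
  simp only [← hβ.toAddChar_apply, AddChar.sum_eq_ite, hchar]

lemma sum_mul_pairChar (u : Ω × Ω) :
    ∑ a : Ω × Ω, β a.1 a.2 * hβ.pairChar u a = Fintype.card Ω * β u.1 (-u.2) := by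
  classical
  calc ∑ a : Ω × Ω, β a.1 a.2 * hβ.pairChar u a
      = ∑ a₁, β u.1 a₁ * ∑ a₂, β (a₁ + u.2) a₂ := by
        simp only [Fintype.sum_prod_type, pairChar_apply, Finset.mul_sum, hβ.map_add_left]
        exact Finset.sum_congr rfl fun _ _ => Finset.sum_congr rfl fun _ _ => by ring
    _ = Fintype.card Ω * β u.1 (-u.2) := by
        simp [hβ.sum_apply_right hnd, add_eq_zero_iff_eq_neg, mul_comm]

lemma sum_re_mul_pairChar (u : Ω × Ω) :
    ∑ a : Ω × Ω, ((β a.1 a.2).re : ℂ) * hβ.pairChar u a = Fintype.card Ω * (β u.1 u.2).re := by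
  have hconj : ∑ a : Ω × Ω, conj (β a.1 a.2) * hβ.pairChar u a = Fintype.card Ω * β u.1 u.2 := by
    have h := congrArg conj (hβ.sum_mul_pairChar hnd (-u))
    simp only [map_sum, map_mul, map_natCast, ← hβ.conj_pairChar, Complex.conj_conj, neg_neg,
      Prod.fst_neg, Prod.snd_neg] at h
    rw [h, hβ.map_neg_left, Complex.conj_conj]
  simp only [Complex.re_eq_add_conj, div_mul_eq_mul_div, add_mul, ← Finset.sum_div,
    Finset.sum_add_distrib, hβ.sum_mul_pairChar hnd, hconj, hβ.map_neg_right]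
  ring

end Nondegenerate

end IsSymmBicharacter

section Haagerup

variable {Ω H : Type*} [AddCommGroup Ω] [NormedAddCommGroup H] [InnerProductSpace ℂ H]
  {β : Ω → Ω → ℂ} {d : ℕ} {φ ψ : Ω → H}

lemma haagerup_apply_of_inner_eq (hβ : IsSymmBicharacter β)
    (hFourier : ∀ x y, ⟪φ x, ψ y⟫_ℂ = (1 / Real.sqrt d : ℝ) * β x y) (p q : Ω × Ω) :
    haagerup d φ ψ p q = (d : ℝ)⁻¹ * (β (q.1 - p.1) (q.2 - p.2)).re := by
  have hconj : ∀ x y, ⟪ψ y, φ x⟫_ℂ = (1 / Real.sqrt d : ℝ) * conj (β x y) := fun x y => by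
    rw [← inner_conj_symm, hFourier, map_mul, Complex.conj_ofReal]
  have hd : (d : ℝ) * (1 / Real.sqrt d) ^ 4 = (d : ℝ)⁻¹ := by
    rw [one_div, inv_pow, show 4 = 2 * 2 from rfl, pow_mul, Real.sq_sqrt d.cast_nonneg]
    rcases eq_or_ne (d : ℝ) 0 with h | h
    · simp [h]
    · field_simp
  simp only [haagerup, hFourier, hconj, hβ.map_sub_sub]
  rw [← hd, mul_assoc (d : ℝ), ← Complex.re_ofReal_mul ((1 / Real.sqrt d) ^ 4)]
  congr 2
  push_cast
  ring

variable [Fintype Ω] [DecidableEq Ω]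

theorem charpoly_haagerup (hβ : IsSymmBicharacter β) (hnd : ∀ x, (∀ y, β x y = 1) → x = 0)
    (hcard : Fintype.card Ω = d) (hFourier : ∀ x y, ⟪φ x, ψ y⟫_ℂ = (1 / Real.sqrt d : ℝ) * β x y) :
    (haagerup d φ ψ).charpoly = ∏ u : Ω × Ω, (X - C (β u.1 u.2).re) := by
  apply Polynomial.map_injective Complex.ofRealHom Complex.ofReal_injective
  rw [← charpoly_map, Polynomial.map_prod]
  simp only [Polynomial.map_sub, map_X, map_C]
  refine charpoly_eq_prod_of_linearIndependent_eigenvectors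
    ((AddChar.linearIndependent (Ω × Ω) ℂ).comp _ (hβ.pairChar_injective hnd)) fun u => ?_
  have hentry (p q : Ω × Ω) : (haagerup d φ ψ).map Complex.ofRealHom p q =
      (d : ℂ)⁻¹ * (β (q - p).1 (q - p).2).re := by
    simp [haagerup_apply_of_inner_eq hβ hFourier]
  have hd : (d : ℂ) ≠ 0 := by simp [← hcard]
  rw [Function.comp_apply,
    mulVec_addChar_eq_smul (f := fun a => (d : ℂ)⁻¹ * (β a.1 a.2).re) hentry]
  simp_rw [mul_assoc, ← Finset.mul_sum, hβ.sum_re_mul_pairChar hnd, hcard,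
    inv_mul_cancel_left₀ hd, Complex.ofRealHom_eq_coe]

theorem hasEigenvalue_haagerup_iff (hβ : IsSymmBicharacter β)
    (hnd : ∀ x, (∀ y, β x y = 1) → x = 0) (hcard : Fintype.card Ω = d)
    (hFourier : ∀ x y, ⟪φ x, ψ y⟫_ℂ = (1 / Real.sqrt d : ℝ) * β x y) (μ : ℝ) :
    Module.End.HasEigenvalue (toLin' (haagerup d φ ψ)) μ ↔ ∃ x y, (β x y).re = μ := by
  rw [Module.End.hasEigenvalue_iff_isRoot_charpoly, charpoly_toLin',
    charpoly_haagerup hβ hnd hcard hFourier, IsRoot, eval_prod, Finset.prod_eq_zero_iff]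
  simp [sub_eq_zero, eq_comm]

end Haagerup

theorem haagerup_no_negOne_eigenvalue_iff_odd_general
    {H : Type*} [NormedAddCommGroup H] [InnerProductSpace ℂ H]
    {Ω : Type*} [Fintype Ω] [DecidableEq Ω] [AddCommGroup Ω]
    (d : ℕ) (hcard : Fintype.card Ω = d)
    (β : Ω → Ω → ℂ)
    (hβnorm : ∀ x y, ‖β x y‖ = 1)
    (hβsymm : ∀ x y, β x y = β y x)
    (hβadd : ∀ x₁ x₂ y, β (x₁ + x₂) y = β x₁ y * β x₂ y)
    (hβnondeg : ∀ x, (∀ y, β x y = 1) → x = 0)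
    (φ ψ : OrthonormalBasis Ω ℂ H)
    (hFourier : ∀ x y : Ω, ⟪φ x, ψ y⟫_ℂ = (1 / Real.sqrt d : ℝ) * β x y) :
    (¬ Module.End.HasEigenvalue
        (Matrix.toLin' (haagerup d (fun x => φ x) (fun y => ψ y))) (-1)) ↔ Odd d := by
  have hβ : IsSymmBicharacter β := ⟨hβnorm, hβsymm, hβadd⟩
  rw [hasEigenvalue_haagerup_iff hβ hβnondeg hcard (φ := fun x => φ x) hFourier]
  simp only [hβ.re_eq_neg_one_iff, hβ.exists_eq_neg_one_iff_even hβnondeg, hcard,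
    Nat.not_even_iff_odd]

theorem haagerup_no_negOne_eigenvalue_iff_odd
    {H : Type*} [NormedAddCommGroup H] [InnerProductSpace ℂ H] [FiniteDimensional ℂ H]
    {Ω : Type*} [Fintype Ω] [DecidableEq Ω] [AddCommGroup Ω]
    (d : ℕ) (hcard : Fintype.card Ω = d) (hdim : Module.finrank ℂ H = d)
    (β : Ω → Ω → ℂ)
    (hβnorm : ∀ x y, ‖β x y‖ = 1)
    (hβsymm : ∀ x y, β x y = β y x)
    (hβadd : ∀ x₁ x₂ y, β (x₁ + x₂) y = β x₁ y * β x₂ y)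
    (hβnondeg : ∀ x, (∀ y, β x y = 1) → x = 0)
    (φ ψ : OrthonormalBasis Ω ℂ H)
    (hFourier : ∀ x y : Ω, ⟪φ x, ψ y⟫_ℂ = (1 / Real.sqrt d : ℝ) * β x y) :
    (¬ Module.End.HasEigenvalue
        (Matrix.toLin' (haagerup d (fun x => φ x) (fun y => ψ y))) (-1)) ↔ Odd d :=
  haagerup_no_negOne_eigenvalue_iff_odd_general d hcard β hβnorm hβsymm hβadd hβnondeg φ ψ hFourier
end
end

section
/- Let A, B : Ω → L(H) be compatible observables and let C : Ω×Ω → L(H) be a joint observable of A and B. If there exist two distinct pairs (x₁,y₁) ≠ (x₂,y₂) in Ω×Ω such that ran C(x₁,y₁) ∩ ran C(x₂,y₂) ≠ {0}, then the pair (A, B) is not an extreme point of the convex set CO(Ω) of all compatible pairs of observables. -/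
open scoped InnerProductSpace

noncomputable section

variable {H : Type*} [NormedAddCommGroup H] [InnerProductSpace ℂ H] [FiniteDimensional ℂ H]
variable {Ω : Type*} [Fintype Ω]

/-- An observable with outcome set `Ω`: positive semidefinite operators summing to `1`. -/
def IsObservable {Ω H : Type*} [Fintype Ω] [NormedAddCommGroup H] [InnerProductSpace ℂ H]
    [CompleteSpace H] (A : Ω → H →L[ℂ] H) : Prop :=
  (∀ x, (A x).IsPositive) ∧ (∑ x, A x) = 1

/-- `C` is a joint observable of `A` and `B`. -/
def IsJointObservable {Ω H : Type*} [Fintype Ω] [NormedAddCommGroup H] [InnerProductSpace ℂ H]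
    [CompleteSpace H] (C : Ω × Ω → H →L[ℂ] H) (A B : Ω → H →L[ℂ] H) : Prop :=
  IsObservable C ∧ (∀ x, (∑ y, C (x, y)) = A x) ∧ (∀ y, (∑ x, C (x, y)) = B y)

/-- The set of all compatible pairs of observables. -/
def CO (Ω H : Type*) [Fintype Ω] [NormedAddCommGroup H] [InnerProductSpace ℂ H]
    [CompleteSpace H] : Set ((Ω → H →L[ℂ] H) × (Ω → H →L[ℂ] H)) :=
  {AB | ∃ C, IsJointObservable C AB.1 AB.2}

/-!
Let `v ≠ 0` lie in `ran C p₁ ∩ ran C p₂`. If `v = T u` with `T` positive, Cauchy–Schwarz for the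
semi-inner product `⟪T ·, ·⟫` gives `|v⟩⟨v| ≤ ⟪T u, u⟫ T`, so some `R = ε |v⟩⟨v| ≠ 0` lies below
both `C p₁` and `C p₂`. Moving the weight `R` from outcome `p₂` to `p₁`, or from `p₁` to `p₂`, keeps
`C` a joint observable and changes its margins by `± d`, where `d ≠ 0` because `p₁` and `p₂`
differ in some coordinate. Hence `(A, B)` is the midpoint of the two distinct compatible pairs
`(A, B) ± d`.
-/

open RCLike InnerProductSpace Filter Topology

namespace ContinuousLinearMap

variable {𝕜 E : Type*} [RCLike 𝕜] [NormedAddCommGroup E] [InnerProductSpace 𝕜 E]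

theorem IsPositive.norm_inner_sq_le {T : E →L[𝕜] E} (hT : T.IsPositive) (x y : E) :
    ‖⟪T x, y⟫_𝕜‖ ^ 2 ≤ re ⟪T x, x⟫_𝕜 * re ⟪T y, y⟫_𝕜 := by
  let c : PreInnerProductSpace.Core 𝕜 E :=
    { inner x y := ⟪T x, y⟫_𝕜
      conj_inner_symm x y := by simp [hT.inner_left_eq_inner_right]
      re_inner_nonneg := hT.re_inner_nonneg_left
      add_left x y z := by simp [inner_add_left]
      smul_left x y r := by simp [inner_smul_left] }
  have hcs := InnerProductSpace.Core.inner_mul_inner_self_le (c := c) x y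
  change ‖⟪T x, y⟫_𝕜‖ * ‖⟪T y, x⟫_𝕜‖ ≤ re ⟪T x, x⟫_𝕜 * re ⟪T y, y⟫_𝕜 at hcs
  rwa [hT.inner_left_eq_inner_right y, norm_inner_symm y (T x), ← sq] at hcs

theorem IsPositive.smul_rankOne_le {T : E →L[𝕜] E} (hT : T.IsPositive) (u : E) {ε : ℝ}
    (hε : ε * re ⟪T u, u⟫_𝕜 ≤ 1) : (ε : 𝕜) • rankOne 𝕜 (T u) (T u) ≤ T := by
  rw [le_def, isPositive_def]
  refine ⟨hT.isSymmetric.sub ((isSymmetric_rankOne_self _).smul (conj_ofReal ε)), fun w => ?_⟩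
  have hcs := hT.norm_inner_sq_le u w
  have hu := hT.re_inner_nonneg_left u
  have hw := hT.re_inner_nonneg_left w
  have hform : (T - (ε : 𝕜) • rankOne 𝕜 (T u) (T u)).reApplyInnerSelf w
      = re ⟪T w, w⟫_𝕜 - ε * ‖⟪T u, w⟫_𝕜‖ ^ 2 := by
    simp only [reApplyInnerSelf, sub_apply, smul_apply, rankOne_apply, inner_sub_left,
      inner_smul_left, conj_ofReal, RCLike.conj_mul, map_sub, re_ofReal_mul]
    norm_cast
  rw [hform]
  rcases le_or_gt 0 ε with hε0 | hε0
  · nlinarith [mul_le_mul_of_nonneg_left hcs hε0]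
  · nlinarith [sq_nonneg ‖⟪T u, w⟫_𝕜‖]

theorem IsPositive.eventually_smul_rankOne_le {T : E →L[𝕜] E} (hT : T.IsPositive) {v : E}
    (hv : v ∈ T.range) : ∀ᶠ ε : ℝ in 𝓝 0, (ε : 𝕜) • rankOne 𝕜 v v ≤ T := by
  obtain ⟨u, rfl⟩ := hv
  have hlim : Tendsto (fun ε : ℝ => ε * re ⟪T u, u⟫_𝕜) (𝓝 0) (𝓝 0) :=
    (continuous_mul_const _).tendsto' 0 0 (zero_mul _)
  filter_upwards [hlim.eventually (eventually_le_nhds zero_lt_one)] with ε hε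
  exact hT.smul_rankOne_le u hε

theorem exists_isPositive_ne_zero_le_of_inf_range_ne_bot {T₁ T₂ : E →L[𝕜] E}
    (hT₁ : T₁.IsPositive) (hT₂ : T₂.IsPositive)
    (h : LinearMap.range (T₁ : E →ₗ[𝕜] E) ⊓ LinearMap.range (T₂ : E →ₗ[𝕜] E) ≠ ⊥) :
    ∃ R : E →L[𝕜] E, R.IsPositive ∧ R ≠ 0 ∧ R ≤ T₁ ∧ R ≤ T₂ := by
  obtain ⟨v, ⟨hv₁, hv₂⟩, hv⟩ := (Submodule.ne_bot_iff _).mp h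
  have hsmall : ∀ᶠ ε : ℝ in 𝓝[>] 0, 0 < ε ∧
      (ε : 𝕜) • rankOne 𝕜 v v ≤ T₁ ∧ (ε : 𝕜) • rankOne 𝕜 v v ≤ T₂ :=
    eventually_mem_nhdsWithin.and <| nhdsWithin_le_nhds <|
      (hT₁.eventually_smul_rankOne_le hv₁).and (hT₂.eventually_smul_rankOne_le hv₂)
  obtain ⟨ε, hε, h₁, h₂⟩ := hsmall.exists
  exact ⟨_, (isPositive_rankOne_self v).smul_of_nonneg (by exact_mod_cast hε.le),
    smul_ne_zero (by exact_mod_cast hε.ne') (rankOne_ne_zero hv hv), h₁, h₂⟩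

end ContinuousLinearMap

theorem Set.eq_zero_of_mem_extremePoints_of_add_mem_of_sub_mem {𝕜 V : Type*} [Field 𝕜]
    [LinearOrder 𝕜] [IsStrictOrderedRing 𝕜] [AddCommGroup V] [Module 𝕜 V] {s : Set V}
    {x v : V} (hx : x ∈ s.extremePoints 𝕜) (hadd : x + v ∈ s) (hsub : x - v ∈ s) : v = 0 := by
  simpa using hx.2 hadd hsub (mem_openSegment_add_sub x v)

theorem Pi.single_left_injective {ι M : Type*} [DecidableEq ι] [Zero M] {m : M} (hm : m ≠ 0) :
    Function.Injective (Pi.single · m : ι → ι → M) := by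
  intro i j h
  by_contra hij
  exact hm (by simpa [Pi.single_apply, hij] using congrFun h i)

theorem Fintype.sum_pi_single_prodMk_left {α β M : Type*} [Fintype β] [DecidableEq α]
    [DecidableEq β] [AddCommMonoid M] (p : α × β) (m : M) (a : α) :
    ∑ b, (Pi.single p m : α × β → M) (a, b) = (Pi.single p.1 m : α → M) a := by
  obtain ⟨a₀, b₀⟩ := p
  simp [Pi.single_apply, ite_and]

theorem Fintype.sum_pi_single_prodMk_right {α β M : Type*} [Fintype α] [DecidableEq α]
    [DecidableEq β] [AddCommMonoid M] (p : α × β) (m : M) (b : β) :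
    ∑ a, (Pi.single p m : α × β → M) (a, b) = (Pi.single p.2 m : β → M) b := by
  obtain ⟨a₀, b₀⟩ := p
  simp [Pi.single_apply, ite_and]

section Observables

variable {ι E : Type*} [Fintype ι] [DecidableEq ι] [NormedAddCommGroup E]
  [InnerProductSpace ℂ E] [CompleteSpace E]

theorem IsJointObservable.add_single_sub_single {C : ι × ι → E →L[ℂ] E} {A B : ι → E →L[ℂ] E}
    (hC : IsJointObservable C A B) {R : E →L[ℂ] E} (hR : R.IsPositive) {p₁ p₂ : ι × ι}
    (hne : p₁ ≠ p₂) (hle : R ≤ C p₂) :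
    IsJointObservable (C + (Pi.single p₁ R - Pi.single p₂ R))
      (A + (Pi.single p₁.1 R - Pi.single p₂.1 R)) (B + (Pi.single p₁.2 R - Pi.single p₂.2 R)) := by
  obtain ⟨⟨hpos, hsum⟩, hA, hB⟩ := hC
  refine ⟨⟨fun q => ?_, ?_⟩, fun x => ?_, fun y => ?_⟩
  · by_cases hq : q = p₂
    · subst hq
      simpa [Pi.single_eq_of_ne' hne, ← sub_eq_add_neg] using
        (ContinuousLinearMap.le_def _ _).mp hle
    · have hsingle : ContinuousLinearMap.IsPositive
          ((Pi.single p₁ R : ι × ι → E →L[ℂ] E) q) := by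
        rw [Pi.single_apply]
        split_ifs
        exacts [hR, ContinuousLinearMap.isPositive_zero]
      simpa [Pi.single_eq_of_ne hq] using (hpos q).add hsingle
  · simp [Finset.sum_add_distrib, Finset.sum_sub_distrib, hsum]
  · simp [Finset.sum_add_distrib, Finset.sum_sub_distrib, Fintype.sum_pi_single_prodMk_left, hA]
  · simp [Finset.sum_add_distrib, Finset.sum_sub_distrib, Fintype.sum_pi_single_prodMk_right, hB]

end Observables

theorem range_overlap_implies_not_extreme_general
    (A B : Ω → H →L[ℂ] H) (C : Ω × Ω → H →L[ℂ] H)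
    (hC : IsJointObservable C A B)
    (p₁ p₂ : Ω × Ω) (hne : p₁ ≠ p₂)
    (hran : LinearMap.range (C p₁ : H →ₗ[ℂ] H) ⊓ LinearMap.range (C p₂ : H →ₗ[ℂ] H) ≠ ⊥) :
    (A, B) ∉ Set.extremePoints ℝ (CO Ω H) := by
  classical
  obtain ⟨R, hR, hR0, hR₁, hR₂⟩ :=
    ContinuousLinearMap.exists_isPositive_ne_zero_le_of_inf_range_ne_bot
      (hC.1.1 p₁) (hC.1.1 p₂) hran
  set d : (Ω → H →L[ℂ] H) × (Ω → H →L[ℂ] H) :=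
    (Pi.single p₁.1 R - Pi.single p₂.1 R, Pi.single p₁.2 R - Pi.single p₂.2 R)
  have hadd : (A, B) + d ∈ CO Ω H := ⟨_, hC.add_single_sub_single hR hne hR₂⟩
  have hsub : (A, B) - d ∈ CO Ω H := by
    refine ⟨C + (Pi.single p₂ R - Pi.single p₁ R), ?_⟩
    convert hC.add_single_sub_single hR hne.symm hR₁ using 1 <;>
      simp only [d, Prod.fst_sub, Prod.snd_sub] <;> abel
  have hd : d ≠ 0 := by
    intro h
    simp only [d, Prod.mk_eq_zero, sub_eq_zero] at h
    exact hne (Prod.ext (Pi.single_left_injective hR0 h.1) (Pi.single_left_injective hR0 h.2))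
  exact fun hext => hd (Set.eq_zero_of_mem_extremePoints_of_add_mem_of_sub_mem hext hadd hsub)

theorem range_overlap_implies_not_extreme
    (A B : Ω → H →L[ℂ] H) (C : Ω × Ω → H →L[ℂ] H)
    (hA : IsObservable A) (hB : IsObservable B)
    (hC : IsJointObservable C A B)
    (p₁ p₂ : Ω × Ω) (hne : p₁ ≠ p₂)
    (hran : LinearMap.range (C p₁ : H →ₗ[ℂ] H) ⊓ LinearMap.range (C p₂ : H →ₗ[ℂ] H) ≠ ⊥) :
    (A, B) ∉ Set.extremePoints ℝ (CO Ω H) :=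
  range_overlap_implies_not_extreme_general A B C hC p₁ p₂ hne hran
end
end

section
/- Let d ≥ 2 be an integer, let λ ∈ [0, 1], and set μ = γ_λ. Then μ ∈ [0, 1], v_μ = u_λ, and u_μ = v_λ. -/
open scoped InnerProductSpace

noncomputable section

/-- The constant `u_ν = (1/√d)·(√(1+(d−1)ν) − √(1−ν))`. -/
def uConst (d : ℕ) (ν : ℝ) : ℝ :=
  (1 / Real.sqrt d) * (Real.sqrt (1 + ((d : ℝ) - 1) * ν) - Real.sqrt (1 - ν))

/-- The constant `v_ν = √(1−ν)`. -/
def vConst (ν : ℝ) : ℝ := Real.sqrt (1 - ν)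

/-- The constant `γ_ν = (1/d)·[(d−2)(1−ν) + 2·√(1−ν)·√(1+(d−1)ν)]`. -/
def gammaConst (d : ℕ) (ν : ℝ) : ℝ :=
  (1 / (d : ℝ)) * (((d : ℝ) - 2) * (1 - ν)
    + 2 * Real.sqrt (1 - ν) * Real.sqrt (1 + ((d : ℝ) - 1) * ν))

/-!
With `v = √(1−λ)` and `w = √(1+(d−1)λ)` one has `(d−1)v² + w² = d`, and `γ_λ` is arranged so that
`1 − γ_λ = (w − v)²/d` and `1 + (d−1)γ_λ = ((d−1)v + w)²/d`. Taking square roots, `v_γ = (w − v)/√d = u_λ`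
and `w_γ = ((d−1)v + w)/√d`, whence `u_γ = (w_γ − v_γ)/√d = d·v/d = v_λ`.
-/

def wConst (d : ℕ) (ν : ℝ) : ℝ := Real.sqrt (1 + ((d : ℝ) - 1) * ν)

theorem vConst_nonneg (ν : ℝ) : 0 ≤ vConst ν := Real.sqrt_nonneg _

theorem wConst_nonneg (d : ℕ) (ν : ℝ) : 0 ≤ wConst d ν := Real.sqrt_nonneg _

theorem uConst_eq (d : ℕ) (ν : ℝ) :
    uConst d ν = (wConst d ν - vConst ν) / Real.sqrt d := by
  rw [uConst, wConst, vConst, one_div_mul_eq_div]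

theorem gammaConst_eq (d : ℕ) (ν : ℝ) :
    gammaConst d ν = (((d : ℝ) - 2) * (1 - ν) + 2 * vConst ν * wConst d ν) / d := by
  rw [gammaConst, vConst, wConst, one_div_mul_eq_div]

section

variable {d : ℕ} {ν : ℝ}

theorem sq_vConst (h : ν ≤ 1) : vConst ν ^ 2 = 1 - ν :=
  Real.sq_sqrt (by linarith)

theorem sq_wConst (h : 0 ≤ 1 + ((d : ℝ) - 1) * ν) : wConst d ν ^ 2 = 1 + ((d : ℝ) - 1) * ν :=
  Real.sq_sqrt h

theorem vConst_le_wConst (hν : 0 ≤ ν) : vConst ν ≤ wConst d ν :=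
  Real.sqrt_le_sqrt (by nlinarith [(Nat.cast_nonneg d : (0 : ℝ) ≤ d)])

theorem one_sub_gammaConst (hd : 0 < d) (h₁ : ν ≤ 1) (h₂ : 0 ≤ 1 + ((d : ℝ) - 1) * ν) :
    1 - gammaConst d ν = (wConst d ν - vConst ν) ^ 2 / d := by
  have hd' : (d : ℝ) ≠ 0 := by positivity
  rw [gammaConst_eq]
  field_simp
  linear_combination -sq_vConst h₁ - sq_wConst h₂

theorem one_add_mul_gammaConst (hd : 0 < d) (h₁ : ν ≤ 1) (h₂ : 0 ≤ 1 + ((d : ℝ) - 1) * ν) :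
    1 + ((d : ℝ) - 1) * gammaConst d ν = (((d : ℝ) - 1) * vConst ν + wConst d ν) ^ 2 / d := by
  have hd' : (d : ℝ) ≠ 0 := by positivity
  rw [gammaConst_eq]
  field_simp
  linear_combination (-((d : ℝ) - 1) ^ 2) * sq_vConst h₁ - sq_wConst h₂

theorem one_add_natCast_sub_one_mul_nonneg (hd : 0 < d) (hν : 0 ≤ ν) : 0 ≤ 1 + ((d : ℝ) - 1) * ν := by
  have : (1 : ℝ) ≤ d := Nat.one_le_cast.mpr hd
  nlinarith

theorem sqrt_sq_div_natCast {x : ℝ} (hx : 0 ≤ x) (d : ℕ) :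
    Real.sqrt (x ^ 2 / d) = x / Real.sqrt d := by
  rw [Real.sqrt_div (sq_nonneg x), Real.sqrt_sq hx]

theorem gammaConst_mem_Icc (hd : 0 < d) (hν : ν ∈ Set.Icc (0 : ℝ) 1) :
    gammaConst d ν ∈ Set.Icc (0 : ℝ) 1 := by
  obtain ⟨h₀, h₁⟩ := hν
  have hd₁ : (1 : ℝ) ≤ d := Nat.one_le_cast.mpr hd
  have h₂ := one_add_natCast_sub_one_mul_nonneg hd h₀
  have hgap := one_sub_gammaConst hd h₁ h₂
  have hvw := vConst_le_wConst (d := d) h₀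
  -- `0 ≤ v ≤ w` and `w² ≤ d` give `(w - v)² ≤ d`
  have hw : wConst d ν ^ 2 ≤ d := by rw [sq_wConst h₂]; nlinarith
  have hsq : (wConst d ν - vConst ν) ^ 2 ≤ d := by nlinarith [vConst_nonneg ν]
  constructor
  · have : (wConst d ν - vConst ν) ^ 2 / d ≤ 1 := (div_le_one (by positivity)).mpr hsq
    linarith
  · have : 0 ≤ (wConst d ν - vConst ν) ^ 2 / d := by positivity
    linarith

theorem vConst_gammaConst (hd : 0 < d) (hν : ν ∈ Set.Icc (0 : ℝ) 1) :
    vConst (gammaConst d ν) = uConst d ν := by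
  rw [vConst, one_sub_gammaConst hd hν.2 (one_add_natCast_sub_one_mul_nonneg hd hν.1),
    sqrt_sq_div_natCast (sub_nonneg.mpr (vConst_le_wConst hν.1)), uConst_eq]

theorem uConst_gammaConst (hd : 0 < d) (hν : ν ∈ Set.Icc (0 : ℝ) 1) :
    uConst d (gammaConst d ν) = vConst ν := by
  have h₂ := one_add_natCast_sub_one_mul_nonneg hd hν.1
  have hd₁ : (1 : ℝ) ≤ d := Nat.one_le_cast.mpr hd
  have hsum : 0 ≤ ((d : ℝ) - 1) * vConst ν + wConst d ν :=
    add_nonneg (mul_nonneg (by linarith) (vConst_nonneg ν)) (wConst_nonneg d ν)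
  have hsqrt : Real.sqrt d ^ 2 = d := Real.sq_sqrt (Nat.cast_nonneg d)
  rw [uConst_eq, wConst, one_add_mul_gammaConst hd hν.2 h₂, sqrt_sq_div_natCast hsum,
    vConst_gammaConst hd hν, uConst_eq]
  field_simp
  rw [hsqrt]
  ring

end

theorem gamma_exchanges_u_and_v (d : ℕ) (hd : 2 ≤ d) (lam : ℝ)
    (hlam : lam ∈ Set.Icc (0 : ℝ) 1) :
    gammaConst d lam ∈ Set.Icc (0 : ℝ) 1 ∧
      vConst (gammaConst d lam) = uConst d lam ∧
      uConst d (gammaConst d lam) = vConst lam := by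
  have hd₀ : 0 < d := by omega
  exact ⟨gammaConst_mem_Icc hd₀ hlam, vConst_gammaConst hd₀ hlam, uConst_gammaConst hd₀ hlam⟩
end
end

section
/- Let d ≥ 2 and let {φ_x : x∈Ω}, {ψ_y : y∈Ω} be two mutually unbiased bases of a d-dimensional complex Hilbert space H with |Ω| = d. For any x, y ∈ Ω, the operator Π(x,y) = (d/(d−1))·[A(x) + B(y) − (A(x)B(y) + B(y)A(x))] is the orthogonal projection of H onto the (two-dimensional) linear span of {φ_x, ψ_y}; that is, Π(x,y) is self-adjoint, Π(x,y)² = Π(x,y), and ran Π(x,y) = span{φ_x, ψ_y}. -/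
/-!
Write `A = |a⟩⟨a|`, `B = |b⟩⟨b|` for unit vectors `a, b` and `s = |⟪a, b⟫|²`. Then `ABA = sA` and
`BAB = sB`, so `S = A + B - (AB + BA)` satisfies `SA = (1 - s)A` and `SB = (1 - s)B`; hence
`S² = (1 - s)S`, and `S` multiplies `a` and `b` by `1 - s` while its range lies in `span {a, b}`.
For mutually unbiased bases `s = 1/d`, so `(1 - s)⁻¹ = d/(d - 1)`.
-/

open scoped InnerProductSpace

noncomputable section

/-- The rank-one operator `|φ⟩⟨φ|`. -/
def outer {H : Type*} [NormedAddCommGroup H] [InnerProductSpace ℂ H] (φ : H) : H →L[ℂ] H :=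
  (innerSL ℂ φ).smulRight φ

section IdempotentPair

variable {R A : Type*} [CommRing R] [Ring A] [Algebra R A] {a b : A} {s : R}

theorem IsIdempotentElem.add_sub_mul_add_mul_mul_left (ha : IsIdempotentElem a)
    (hab : a * b * a = s • a) : (a + b - (a * b + b * a)) * a = (1 - s) • a := by
  rw [sub_mul, add_mul, add_mul, ha.eq, hab, mul_assoc b a a, ha.eq]
  module

theorem IsIdempotentElem.add_sub_mul_add_mul_mul_self (ha : IsIdempotentElem a)
    (hb : IsIdempotentElem b) (hab : a * b * a = s • a) (hba : b * a * b = s • b) :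
    (a + b - (a * b + b * a)) * (a + b - (a * b + b * a)) =
      (1 - s) • (a + b - (a * b + b * a)) := by
  have hSa := ha.add_sub_mul_add_mul_mul_left hab
  have hSb : (a + b - (a * b + b * a)) * b = (1 - s) • b := by
    rw [add_comm a b, add_comm (a * b)]
    exact hb.add_sub_mul_add_mul_mul_left hba
  rw [mul_sub, mul_add, mul_add, ← mul_assoc, ← mul_assoc, hSa, hSb, smul_mul_assoc,
    smul_mul_assoc]
  module

end IdempotentPair

section RankOne

variable {H : Type*} [NormedAddCommGroup H] [InnerProductSpace ℂ H]

@[simp]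
theorem outer_apply (φ v : H) : outer φ v = ⟪φ, v⟫_ℂ • φ := rfl

theorem outer_apply_self {φ : H} (hφ : ‖φ‖ = 1) : outer φ φ = φ := by
  simp [inner_self_eq_norm_sq_to_K, hφ]

theorem isSelfAdjoint_outer [CompleteSpace H] (φ : H) : IsSelfAdjoint (outer φ) := by
  rw [ContinuousLinearMap.isSelfAdjoint_iff_isSymmetric]
  intro u v
  simp only [ContinuousLinearMap.coe_coe, outer_apply, inner_smul_left, inner_smul_right,
    inner_conj_symm]
  ring

theorem isIdempotentElem_outer {φ : H} (hφ : ‖φ‖ = 1) : IsIdempotentElem (outer φ) := by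
  ext v
  simp [outer_apply_self hφ]

theorem outer_mul_outer_mul_outer (φ χ : H) :
    outer φ * outer χ * outer φ = (‖⟪φ, χ⟫_ℂ‖ ^ 2) • outer φ := by
  ext v
  simp only [mul_apply_eq_comp, smul_apply, outer_apply, inner_smul_right, smul_smul,
    ← Complex.coe_smul]
  rw [Complex.ofReal_pow, ← Complex.mul_conj', inner_conj_symm]
  ring_nf

theorem outer_apply_mem_span_pair_left (a b v : H) : outer a v ∈ Submodule.span ℂ {a, b} :=
  Submodule.smul_mem _ _ (Submodule.subset_span (by simp))

theorem outer_apply_mem_span_pair_right (a b v : H) : outer b v ∈ Submodule.span ℂ {a, b} :=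
  Submodule.smul_mem _ _ (Submodule.subset_span (by simp))

def spanProj (a b : H) : H →L[ℂ] H :=
  (1 - ‖⟪a, b⟫_ℂ‖ ^ 2)⁻¹ • (outer a + outer b - (outer a * outer b + outer b * outer a))

theorem spanProj_comm (a b : H) : spanProj a b = spanProj b a := by
  rw [spanProj, spanProj, norm_inner_symm, add_comm (outer a), add_comm (outer a * outer b)]

theorem isSelfAdjoint_spanProj [CompleteSpace H] (a b : H) : IsSelfAdjoint (spanProj a b) := by
  have hA := isSelfAdjoint_outer a
  have hB := isSelfAdjoint_outer b
  refine .smul (IsSelfAdjoint.all _) ((hA.add hB).sub ?_)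
  rw [IsSelfAdjoint, star_add, star_mul, star_mul, hA.star_eq, hB.star_eq, add_comm]

theorem spanProj_mul_self {a b : H} (ha : ‖a‖ = 1) (hb : ‖b‖ = 1) :
    spanProj a b * spanProj a b = spanProj a b := by
  have hS := (isIdempotentElem_outer ha).add_sub_mul_add_mul_mul_self (isIdempotentElem_outer hb)
    (outer_mul_outer_mul_outer a b) (by rw [outer_mul_outer_mul_outer, norm_inner_symm])
  rw [spanProj, smul_mul_smul_comm, hS, smul_smul, mul_right_comm]
  congr 1
  have h := mul_inv_mul_cancel (1 - ‖⟪a, b⟫_ℂ‖ ^ 2)⁻¹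
  rwa [inv_inv] at h

theorem spanProj_apply_left {a b : H} (ha : ‖a‖ = 1) (hab : ‖⟪a, b⟫_ℂ‖ < 1) :
    spanProj a b a = a := by
  have hS := (isIdempotentElem_outer ha).add_sub_mul_add_mul_mul_left
    (outer_mul_outer_mul_outer a b)
  have hs : 1 - ‖⟪a, b⟫_ℂ‖ ^ 2 ≠ 0 :=
    (sub_pos.2 (pow_lt_one₀ (norm_nonneg _) hab two_ne_zero)).ne'
  calc spanProj a b a
      = (1 - ‖⟪a, b⟫_ℂ‖ ^ 2)⁻¹ •
          ((outer a + outer b - (outer a * outer b + outer b * outer a)) * outer a) a := by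
        rw [spanProj, smul_apply, mul_apply_eq_comp, outer_apply_self ha]
    _ = a := by rw [hS, smul_apply, smul_smul, inv_mul_cancel₀ hs, one_smul,
        outer_apply_self ha]

theorem spanProj_apply_right {a b : H} (hb : ‖b‖ = 1) (hab : ‖⟪a, b⟫_ℂ‖ < 1) :
    spanProj a b b = b := by
  rw [spanProj_comm]
  exact spanProj_apply_left hb (by rwa [norm_inner_symm])

theorem range_spanProj {a b : H} (ha : ‖a‖ = 1) (hb : ‖b‖ = 1) (hab : ‖⟪a, b⟫_ℂ‖ < 1) :
    LinearMap.range (spanProj a b : H →ₗ[ℂ] H) = Submodule.span ℂ {a, b} := by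
  apply le_antisymm
  · rintro _ ⟨v, rfl⟩
    have hA := outer_apply_mem_span_pair_left a b
    have hB := outer_apply_mem_span_pair_right a b
    simp only [spanProj, ContinuousLinearMap.coe_coe, smul_apply, sub_apply, add_apply,
      mul_apply_eq_comp]
    exact Submodule.smul_mem _ _ (sub_mem (add_mem (hA v) (hB v)) (add_mem (hA _) (hB _)))
  · rw [Submodule.span_le, Set.insert_subset_iff, Set.singleton_subset_iff]
    exact ⟨⟨a, spanProj_apply_left ha hab⟩, ⟨b, spanProj_apply_right hb hab⟩⟩

end RankOne

theorem pi_is_projection_onto_span_general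
    {H : Type*} [NormedAddCommGroup H] [InnerProductSpace ℂ H] [FiniteDimensional ℂ H]
    {Ω : Type*} [Fintype Ω]
    (d : ℕ) (hd : 2 ≤ d)
    (φ ψ : OrthonormalBasis Ω ℂ H)
    (hMUB : ∀ x y : Ω, ‖⟪φ x, ψ y⟫_ℂ‖ = 1 / Real.sqrt d)
    (x y : Ω) (Pi : H →L[ℂ] H)
    (hPi : Pi = ((d : ℝ) / ((d : ℝ) - 1)) • (outer (φ x) + outer (ψ y)
      - (outer (φ x) * outer (ψ y) + outer (ψ y) * outer (φ x)))) :
    IsSelfAdjoint Pi ∧ Pi * Pi = Pi ∧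
      LinearMap.range (Pi : H →ₗ[ℂ] H) = Submodule.span ℂ {φ x, ψ y} := by
  have hd1 : (1 : ℝ) < d := by exact_mod_cast hd
  have hsq : ‖⟪φ x, ψ y⟫_ℂ‖ ^ 2 = 1 / d := by
    rw [hMUB, div_pow, one_pow, Real.sq_sqrt (Nat.cast_nonneg d)]
  have hlt : ‖⟪φ x, ψ y⟫_ℂ‖ < 1 := by
    rw [hMUB, div_lt_one (by positivity), Real.lt_sqrt zero_le_one, one_pow]
    exact hd1
  have hPi' : Pi = spanProj (φ x) (ψ y) := by
    rw [hPi, spanProj, hsq, one_sub_div (by positivity), inv_div]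
  have hφ := φ.orthonormal.1 x
  have hψ := ψ.orthonormal.1 y
  subst hPi'
  exact ⟨isSelfAdjoint_spanProj _ _, spanProj_mul_self hφ hψ, range_spanProj hφ hψ hlt⟩

theorem pi_is_projection_onto_span
    {H : Type*} [NormedAddCommGroup H] [InnerProductSpace ℂ H] [FiniteDimensional ℂ H]
    {Ω : Type*} [Fintype Ω] [DecidableEq Ω]
    (d : ℕ) (hd : 2 ≤ d) (hcard : Fintype.card Ω = d) (hdim : Module.finrank ℂ H = d)
    (φ ψ : OrthonormalBasis Ω ℂ H)
    (hMUB : ∀ x y : Ω, ‖⟪φ x, ψ y⟫_ℂ‖ = 1 / Real.sqrt d)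
    (x y : Ω) (Pi : H →L[ℂ] H)
    (hPi : Pi = ((d : ℝ) / ((d : ℝ) - 1)) • (outer (φ x) + outer (ψ y)
      - (outer (φ x) * outer (ψ y) + outer (ψ y) * outer (φ x)))) :
    IsSelfAdjoint Pi ∧ Pi * Pi = Pi ∧
      LinearMap.range (Pi : H →ₗ[ℂ] H) = Submodule.span ℂ {φ x, ψ y} :=
  pi_is_projection_onto_span_general d hd φ ψ hMUB x y Pi hPi
end
end

section
/- Let Ω be a finite abelian group of order d endowed with a nondegenerate symmetric bicharacter ⟨·,·⟩. Then there exist r, s ∈ Ω with ⟨r,s⟩ = −1 if and only if d is even. -/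
/-!
For each `y`, `x ↦ β x y` is an additive character of `Ω`, so its values are `d`-th roots of
unity and `-1` can occur only when `d` is even. Conversely, if `d` is even, Cauchy's theorem gives
`r` of order `2`; then every `β r y` is `±1`, and nondegeneracy rules out that all of them are
`1`.
-/

namespace AddChar

variable {A R : Type*}

def ofMapZeroNeZero [AddMonoid A] [MonoidWithZero R] [IsLeftCancelMulZero R] (f : A → R)
    (h0 : f 0 ≠ 0) (hadd : ∀ a b, f (a + b) = f a * f b) : AddChar A R where
  toFun := f
  map_zero_eq_one' := mul_left_cancel₀ h0 (by rw [← hadd, add_zero, mul_one])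
  map_add_eq_mul' := hadd

lemma pow_card_eq_one [AddGroup A] [Fintype A] [Monoid R] (ψ : AddChar A R) (a : A) :
    ψ a ^ Fintype.card A = 1 := by
  rw [← map_nsmul_eq_pow, card_nsmul_eq_zero, map_zero_eq_one]

lemma ne_neg_one_of_odd_card [AddGroup A] [Fintype A] [Ring R] [Nontrivial R]
    (hR : ringChar R ≠ 2) (hodd : Odd (Fintype.card A)) (ψ : AddChar A R) (a : A) :
    ψ a ≠ -1 := by
  intro h
  have := ψ.pow_card_eq_one a
  rw [h, hodd.neg_one_pow] at this
  exact Ring.neg_one_ne_one_of_char_ne_two hR this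

lemma eq_neg_one_of_two_nsmul_eq_zero [AddMonoid A] [Ring R] [NoZeroDivisors R]
    (ψ : AddChar A R) {a : A} (ha : 2 • a = 0) (hψ : ψ a ≠ 1) : ψ a = -1 := by
  have hsq : ψ a * ψ a = 1 := by rw [← pow_two, ← map_nsmul_eq_pow, ha, map_zero_eq_one]
  exact (mul_self_eq_one_iff.mp hsq).resolve_left hψ

end AddChar

theorem bicharacter_negOne_iff_even_general
    {Ω : Type*} [Fintype Ω] [AddCommGroup Ω]
    (d : ℕ) (hcard : Fintype.card Ω = d)
    (β : Ω → Ω → ℂ)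
    (hβnorm : ∀ x y, ‖β x y‖ = 1)
    (hβadd : ∀ x₁ x₂ y, β (x₁ + x₂) y = β x₁ y * β x₂ y)
    (hβnondeg : ∀ x, (∀ y, β x y = 1) → x = 0) :
    (∃ r s : Ω, β r s = -1) ↔ Even d := by
  subst hcard
  let ψ (y : Ω) : AddChar Ω ℂ :=
    .ofMapZeroNeZero (β · y) (norm_ne_zero_iff.mp (by simp [hβnorm])) (hβadd · · y)
  constructor
  · rintro ⟨r, s, hrs⟩
    by_contra hodd
    exact (ψ s).ne_neg_one_of_odd_card (by simp) (Nat.not_even_iff_odd.mp hodd) r hrs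
  · intro heven
    obtain ⟨r, hr⟩ := exists_prime_addOrderOf_dvd_card 2 heven.two_dvd
    obtain ⟨y, hy⟩ : ∃ y, β r y ≠ 1 := by
      by_contra! h
      simp [hβnondeg r h] at hr
    exact ⟨r, y, (ψ y).eq_neg_one_of_two_nsmul_eq_zero (hr ▸ addOrderOf_nsmul_eq_zero r) hy⟩

theorem bicharacter_negOne_iff_even
    {Ω : Type*} [Fintype Ω] [AddCommGroup Ω]
    (d : ℕ) (hcard : Fintype.card Ω = d)
    (β : Ω → Ω → ℂ)
    (hβnorm : ∀ x y, ‖β x y‖ = 1)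
    (hβsymm : ∀ x y, β x y = β y x)
    (hβadd : ∀ x₁ x₂ y, β (x₁ + x₂) y = β x₁ y * β x₂ y)
    (hβnondeg : ∀ x, (∀ y, β x y = 1) → x = 0) :
    (∃ r s : Ω, β r s = -1) ↔ Even d :=
  bicharacter_negOne_iff_even_general d hcard β hβnorm hβadd hβnondeg
end

section
/- Let d ≥ 2 be an integer, let Ω be a finite set with |Ω| = d, and let a, b, c, e ∈ ℝ. Let K be the real d²×d² matrix with rows and columns indexed by Ω×Ω and entries K_{(x,y),(z,t)} = a·δ_{x,z} + b·δ_{y,t} + 2c·δ_{x,z}δ_{y,t} + e, where δ denotes the Kronecker delta. Then K is invertible if and only if c ≠ 0, d·a + 2c ≠ 0, d·b + 2c ≠ 0, and d·a + d·b + 2c + d²·e ≠ 0. -/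
/-!
With `P` the projection onto the constant vectors of `ℝ^Ω` (all entries `1/d`) and `Q = 1 - P`,
the four Kronecker products `P ⊗ P, P ⊗ Q, Q ⊗ P, Q ⊗ Q` are nonzero complete orthogonal
idempotents, and `K` is their combination with coefficients `da + db + 2c + d²e`, `db + 2c`,
`da + 2c` and `2c`. Such a combination is invertible exactly when every coefficient is nonzero:
the inverse inverts the coefficients, and a zero coefficient makes `K` kill the corresponding
idempotent.
-/

open Matrix
open scoped Kronecker

namespace OrthogonalIdempotents

variable {𝕜 R ι : Type*} [Field 𝕜] [Ring R] [Algebra 𝕜 R] [Fintype ι] [DecidableEq ι]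
  {e : ι → R}

theorem sum_smul_mul (he : OrthogonalIdempotents e) (μ : ι → 𝕜) (j : ι) :
    (∑ i, μ i • e i) * e j = μ j • e j := by
  simp [Finset.sum_mul, he.mul_eq]

theorem sum_smul_mul_sum_smul (he : OrthogonalIdempotents e) (μ ν : ι → 𝕜) :
    (∑ i, μ i • e i) * (∑ i, ν i • e i) = ∑ i, (μ i * ν i) • e i := by
  simp only [Finset.mul_sum, mul_smul_comm, he.sum_smul_mul, smul_smul, mul_comm]

end OrthogonalIdempotents

namespace CompleteOrthogonalIdempotents

variable {𝕜 R ι : Type*} [Field 𝕜] [Ring R] [Algebra 𝕜 R] [Fintype ι] {e : ι → R}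

theorem isUnit_sum_smul_iff (he : CompleteOrthogonalIdempotents e) (hne : ∀ i, e i ≠ 0)
    (μ : ι → 𝕜) : IsUnit (∑ i, μ i • e i) ↔ ∀ i, μ i ≠ 0 := by
  classical
  have hsum : ∑ i, (1 : 𝕜) • e i = 1 := by simpa using he.complete
  constructor
  · intro hu j hj
    apply hne j
    rw [← hu.mul_right_eq_zero, he.sum_smul_mul, hj, zero_smul]
  · intro hμ
    refine isUnit_iff_exists.mpr ⟨∑ i, (μ i)⁻¹ • e i, ?_, ?_⟩ <;>
      simp only [he.sum_smul_mul_sum_smul, mul_inv_cancel₀ (hμ _), inv_mul_cancel₀ (hμ _), hsum]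

theorem kronecker {m n ι κ K : Type*} [CommRing K] [Fintype m] [Fintype n]
    [DecidableEq m] [DecidableEq n] [Fintype ι] [Fintype κ]
    {p : ι → Matrix m m K} {q : κ → Matrix n n K}
    (hp : CompleteOrthogonalIdempotents p) (hq : CompleteOrthogonalIdempotents q) :
    CompleteOrthogonalIdempotents fun ij : ι × κ => p ij.1 ⊗ₖ q ij.2 := by
  refine ⟨⟨fun ij => ?_, fun ij ij' hne => ?_⟩, ?_⟩
  · simp only [IsIdempotentElem, ← mul_kronecker_mul, (hp.idem _).eq, (hq.idem _).eq]
  · simp only [← mul_kronecker_mul]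
    by_cases h : ij.1 = ij'.1
    · rw [hq.ortho (fun h₂ => hne (Prod.ext h h₂)), kronecker_zero]
    · rw [hp.ortho h, zero_kronecker]
  · calc ∑ ij : ι × κ, p ij.1 ⊗ₖ q ij.2 = (∑ i, p i) ⊗ₖ (∑ j, q j) := by
          ext; simp [Fintype.sum_prod_type, Matrix.sum_apply, Finset.sum_mul_sum]
      _ = 1 := by rw [hp.complete, hq.complete, one_kronecker_one]

end CompleteOrthogonalIdempotents

theorem Matrix.kronecker_ne_zero {l m n p α : Type*} [MulZeroClass α] [NoZeroDivisors α]
    {A : Matrix l m α} {B : Matrix n p α} (hA : A ≠ 0) (hB : B ≠ 0) : A ⊗ₖ B ≠ 0 := by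
  obtain ⟨i, j, hAij⟩ : ∃ i j, A i j ≠ 0 := by
    by_contra! h
    exact hA (Matrix.ext h)
  obtain ⟨k, l, hBkl⟩ : ∃ k l, B k l ≠ 0 := by
    by_contra! h
    exact hB (Matrix.ext h)
  intro h
  have := congr_fun₂ h (i, k) (j, l)
  simp only [kronecker_apply, zero_apply, mul_eq_zero] at this
  tauto

section meanProj

variable (𝕜 Ω : Type*) [Field 𝕜] [Fintype Ω]

def meanProj : Matrix Ω Ω 𝕜 := Matrix.of fun _ _ => (Fintype.card Ω : 𝕜)⁻¹

variable {𝕜 Ω}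

theorem isIdempotentElem_meanProj (hd : (Fintype.card Ω : 𝕜) ≠ 0) :
    IsIdempotentElem (meanProj 𝕜 Ω) := by
  ext
  simp [meanProj, mul_apply]
  field_simp

theorem meanProj_ne_zero [Nonempty Ω] (hd : (Fintype.card Ω : 𝕜) ≠ 0) : meanProj 𝕜 Ω ≠ 0 := by
  intro h
  obtain ⟨x⟩ := ‹Nonempty Ω›
  simpa [meanProj, hd] using congr_fun₂ h x x

theorem one_sub_meanProj_ne_zero [DecidableEq Ω] [Nontrivial Ω] (hd : (Fintype.card Ω : 𝕜) ≠ 0) :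
    1 - meanProj 𝕜 Ω ≠ 0 := by
  intro h
  obtain ⟨x, y, hxy⟩ := exists_pair_ne Ω
  simpa [meanProj, hd, one_apply_ne hxy] using congr_fun₂ h x y

variable (𝕜 Ω) [DecidableEq Ω]

def meanSplit : Fin 2 → Matrix Ω Ω 𝕜 := ![meanProj 𝕜 Ω, 1 - meanProj 𝕜 Ω]

variable {𝕜 Ω}

theorem completeOrthogonalIdempotents_meanSplit (hd : (Fintype.card Ω : 𝕜) ≠ 0) :
    CompleteOrthogonalIdempotents (meanSplit 𝕜 Ω) :=
  .of_isIdempotentElem (isIdempotentElem_meanProj hd)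

theorem meanSplit_ne_zero [Nontrivial Ω] (hd : (Fintype.card Ω : 𝕜) ≠ 0) (i : Fin 2) :
    meanSplit 𝕜 Ω i ≠ 0 := by
  fin_cases i
  exacts [meanProj_ne_zero hd, one_sub_meanProj_ne_zero hd]

theorem eq_sum_smul_kronecker_meanSplit (d : ℕ) (hcard : Fintype.card Ω = d) (hd : (d : 𝕜) ≠ 0)
    (a b c e : 𝕜) (K : Matrix (Ω × Ω) (Ω × Ω) 𝕜)
    (hK : ∀ x y z t : Ω, K (x, y) (z, t) =
      a * (if x = z then 1 else 0) + b * (if y = t then 1 else 0)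
        + 2 * c * ((if x = z then 1 else 0) * (if y = t then 1 else 0)) + e) :
    K = ∑ ij : Fin 2 × Fin 2,
      ![![d * a + d * b + 2 * c + d ^ 2 * e, d * b + 2 * c], ![d * a + 2 * c, 2 * c]] ij.1 ij.2 •
        (meanSplit 𝕜 Ω ij.1 ⊗ₖ meanSplit 𝕜 Ω ij.2) := by
  subst hcard
  ext ⟨x, y⟩ ⟨z, t⟩
  simp [hK, Fintype.sum_prod_type, Fin.sum_univ_two, meanSplit, meanProj, one_apply]
  split_ifs <;> field_simp <;> ring

end meanProj

theorem K_matrix_invertible_iff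
    {Ω : Type*} [Fintype Ω] [DecidableEq Ω]
    (d : ℕ) (hd : 2 ≤ d) (hcard : Fintype.card Ω = d)
    (a b c e : ℝ) (K : Matrix (Ω × Ω) (Ω × Ω) ℝ)
    (hK : ∀ x y z t : Ω, K (x, y) (z, t) =
      a * (if x = z then 1 else 0) + b * (if y = t then 1 else 0)
        + 2 * c * ((if x = z then 1 else 0) * (if y = t then 1 else 0)) + e) :
    IsUnit K ↔ (c ≠ 0 ∧ (d : ℝ) * a + 2 * c ≠ 0 ∧ (d : ℝ) * b + 2 * c ≠ 0 ∧
      (d : ℝ) * a + (d : ℝ) * b + 2 * c + (d : ℝ) ^ 2 * e ≠ 0) := by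
  have hd₀ : (d : ℝ) ≠ 0 := by norm_cast; omega
  have : Nontrivial Ω := Fintype.one_lt_card_iff_nontrivial.mp (by omega)
  have hsplit := completeOrthogonalIdempotents_meanSplit (Ω := Ω) (hcard ▸ hd₀)
  have hne := meanSplit_ne_zero (Ω := Ω) (hcard ▸ hd₀)
  rw [eq_sum_smul_kronecker_meanSplit d hcard hd₀ a b c e K hK,
    (hsplit.kronecker hsplit).isUnit_sum_smul_iff fun _ => kronecker_ne_zero (hne _) (hne _)]
  simp [Prod.forall, Fin.forall_fin_two]
  tauto
end

section
/- Let {φ_x : x∈Ω} and {ψ_y : y∈Ω} be two mutually unbiased bases of a d-dimensional complex Hilbert space H with |Ω| = d. Then the operators {E(x,y) = (1/2)·(A(x)B(y) + B(y)A(x)) : (x,y) ∈ Ω×Ω} are linearly independent in L(H) if and only if −1 is not an eigenvalue of the Haagerup matrix Λ. -/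
open scoped InnerProductSpace

noncomputable section

/-!
Let `C` be the matrix whose column `(x, y)` lists the coefficients `⟪φ z, E(x,y) ψ t⟫` of the
Jordan product `E(x,y)`. The map `T ↦ (⟪φ z, T ψ t⟫)_{z,t}` is injective, so the `E(x,y)` are
independent iff `det C ≠ 0`. Write `2C = D + M`, where the diagonal matrix `D` of overlaps
`⟪φ x, ψ y⟫` comes from `A(x)B(y)` and `M` from `B(y)A(x)`. Parseval and unbiasedness give
`DᴴD = MᴴM = d⁻¹`, while `DᴴM + MᴴD = (2/d) Λ`; hence `CᴴC = (2d)⁻¹ (1 + Λ)` and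
`|det C|² ≠ 0` iff `-1` is not an eigenvalue of `Λ`.
-/

open Matrix

theorem hasEigenvalue_toLin'_iff_det_sub_eq_zero {K n : Type*} [Field K] [Fintype n]
    [DecidableEq n] (A : Matrix n n K) (μ : K) :
    Module.End.HasEigenvalue (toLin' A) μ ↔ (A - μ • 1).det = 0 := by
  rw [Module.End.hasEigenvalue_iff, Module.End.eigenspace_def, ← LinearMap.det_toLin',
    LinearMap.det_eq_zero_iff_ker_ne_bot, map_sub, map_smul, toLin'_one, Module.End.one_eq_id]

section

variable {H : Type*} [NormedAddCommGroup H] [InnerProductSpace ℂ H] {Ω : Type*}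

def jordanProduct (S T : H →L[ℂ] H) : H →L[ℂ] H := (1 / 2 : ℝ) • (S * T + T * S)

lemma inner_jordanProduct_outer_apply (a b u v : H) :
    ⟪u, jordanProduct (outer a) (outer b) v⟫_ℂ =
      (1 / 2 : ℂ) * (⟪u, a⟫_ℂ * ⟪a, b⟫_ℂ * ⟪b, v⟫_ℂ + ⟪u, b⟫_ℂ * ⟪b, a⟫_ℂ * ⟪a, v⟫_ℂ) := by
  simp only [jordanProduct, outer, RCLike.real_smul_eq_coe_smul (K := ℂ), _root_.smul_apply,
    _root_.add_apply, mul_apply_eq_comp, ContinuousLinearMap.smulRight_apply, innerSL_apply_apply,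
    map_smul, inner_add_right, inner_smul_right]
  push_cast
  ring

def innerCoeffs (φ ψ : Ω → H) : (H →L[ℂ] H) →ₗ[ℂ] (Ω × Ω → ℂ) where
  toFun T r := ⟪φ r.1, T (ψ r.2)⟫_ℂ
  map_add' T S := by ext; simp
  map_smul' c T := by ext; simp

lemma innerCoeffs_apply (φ ψ : Ω → H) (T : H →L[ℂ] H) (r : Ω × Ω) :
    innerCoeffs φ ψ T r = ⟪φ r.1, T (ψ r.2)⟫_ℂ := rfl

def IsUnbiased (d : ℕ) (φ ψ : Ω → H) : Prop := ∀ x y, ‖⟪φ x, ψ y⟫_ℂ‖ = 1 / √d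

lemma IsUnbiased.inner_mul_inner {d : ℕ} {φ ψ : Ω → H} (h : IsUnbiased d φ ψ) (x y : Ω) :
    ⟪ψ y, φ x⟫_ℂ * ⟪φ x, ψ y⟫_ℂ = (d : ℂ)⁻¹ := by
  rw [← inner_conj_symm, Complex.conj_mul', h, ← Complex.ofReal_pow, div_pow, one_pow,
    Real.sq_sqrt d.cast_nonneg, one_div, Complex.ofReal_inv, Complex.ofReal_natCast]

variable [Fintype Ω]

lemma ker_innerCoeffs (φ ψ : OrthonormalBasis Ω ℂ H) : LinearMap.ker (innerCoeffs φ ψ) = ⊥ := by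
  refine LinearMap.ker_eq_bot'.2 fun T hT => ?_
  have hT' : ∀ t, T (ψ t) = 0 := fun t => by
    rw [← φ.sum_repr' (T (ψ t))]
    exact Finset.sum_eq_zero fun z _ => by
      rw [show ⟪φ z, T (ψ t)⟫_ℂ = 0 from congrFun hT (z, t), zero_smul]
  exact ContinuousLinearMap.coe_injective (ψ.toBasis.ext fun t => by simpa using hT' t)

lemma IsUnbiased.ne_zero [Nonempty Ω] {d : ℕ} {φ ψ : OrthonormalBasis Ω ℂ H}
    (h : IsUnbiased d φ ψ) : d ≠ 0 := by
  rintro rfl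
  obtain ⟨y⟩ := ‹Nonempty Ω›
  refine ψ.orthonormal.ne_zero y ?_
  rw [← φ.sum_repr' (ψ y)]
  refine Finset.sum_eq_zero fun x _ => ?_
  rw [show ⟪φ x, ψ y⟫_ℂ = 0 by simpa using h x y, zero_smul]

variable [DecidableEq Ω]

def overlapDiag (φ ψ : Ω → H) : Matrix (Ω × Ω) (Ω × Ω) ℂ :=
  diagonal fun p => ⟪φ p.1, ψ p.2⟫_ℂ

def crossCoeffs (φ ψ : Ω → H) : Matrix (Ω × Ω) (Ω × Ω) ℂ :=
  of fun r p => ⟪φ r.1, ψ p.2⟫_ℂ * ⟪ψ p.2, φ p.1⟫_ℂ * ⟪φ p.1, ψ r.2⟫_ℂ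

def jordanCoeffs (φ ψ : Ω → H) : Matrix (Ω × Ω) (Ω × Ω) ℂ :=
  (1 / 2 : ℂ) • (overlapDiag φ ψ + crossCoeffs φ ψ)

lemma innerCoeffs_jordanProduct_outer (φ ψ : OrthonormalBasis Ω ℂ H) (p : Ω × Ω) :
    innerCoeffs φ ψ (jordanProduct (outer (φ p.1)) (outer (ψ p.2))) = (jordanCoeffs φ ψ).col p := by
  obtain ⟨x, y⟩ := p
  ext ⟨z, t⟩
  by_cases hz : z = x <;> by_cases ht : t = y <;>
    simp [innerCoeffs_apply, inner_jordanProduct_outer_apply, jordanCoeffs, overlapDiag,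
      crossCoeffs, φ.inner_eq_ite, ψ.inner_eq_ite, hz, ht, eq_comm (a := y), mul_add]

lemma linearIndependent_jordanProduct_outer_iff (φ ψ : OrthonormalBasis Ω ℂ H) :
    LinearIndependent ℂ (fun p : Ω × Ω => jordanProduct (outer (φ p.1)) (outer (ψ p.2))) ↔
      (jordanCoeffs φ ψ).det ≠ 0 := by
  rw [← LinearMap.linearIndependent_iff _ (ker_innerCoeffs φ ψ), ← isUnit_iff_ne_zero,
    ← isUnit_iff_isUnit_det, ← linearIndependent_cols_iff_isUnit]
  simp only [Function.comp_def, innerCoeffs_jordanProduct_outer]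

variable {d : ℕ}

lemma conjTranspose_overlapDiag_mul_self {φ ψ : Ω → H} (h : IsUnbiased d φ ψ) :
    (overlapDiag φ ψ)ᴴ * overlapDiag φ ψ = (d : ℂ)⁻¹ • 1 := by
  rw [overlapDiag, diagonal_conjTranspose, diagonal_mul_diagonal, smul_one_eq_diagonal]
  congr 1
  funext p
  simpa using h.inner_mul_inner p.1 p.2

lemma conjTranspose_crossCoeffs_mul_self {φ ψ : OrthonormalBasis Ω ℂ H} (h : IsUnbiased d φ ψ) :
    (crossCoeffs φ ψ)ᴴ * crossCoeffs φ ψ = (d : ℂ)⁻¹ • 1 := by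
  ext ⟨x, y⟩ ⟨x', y'⟩
  have hsum : ((crossCoeffs φ ψ)ᴴ * crossCoeffs φ ψ) (x, y) (x', y') =
      (∑ z, ⟪ψ y, φ z⟫_ℂ * ⟪φ z, ψ y'⟫_ℂ) * (∑ t, ⟪φ x', ψ t⟫_ℂ * ⟪ψ t, φ x⟫_ℂ) *
        (⟪ψ y', φ x'⟫_ℂ * ⟪φ x, ψ y⟫_ℂ) := by
    rw [Matrix.mul_apply, Fintype.sum_prod_type, Finset.sum_mul_sum, Finset.sum_mul]
    refine Finset.sum_congr rfl fun z _ => ?_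
    rw [Finset.sum_mul]
    refine Finset.sum_congr rfl fun t _ => ?_
    simp only [crossCoeffs, conjTranspose_apply, of_apply, star_mul', RCLike.star_def,
      inner_conj_symm]
    ring
  rw [hsum, φ.sum_inner_mul_inner, ψ.sum_inner_mul_inner, ψ.inner_eq_ite, φ.inner_eq_ite]
  by_cases hx : x = x' <;> by_cases hy : y = y' <;>
    simp [hx, hy, eq_comm (a := x'), h.inner_mul_inner, one_apply]

lemma conjTranspose_crossCoeffs_mul_overlapDiag_apply (φ ψ : Ω → H) (p q : Ω × Ω) :
    ((crossCoeffs φ ψ)ᴴ * overlapDiag φ ψ) p q =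
      ⟪ψ p.2, φ q.1⟫_ℂ * ⟪φ q.1, ψ q.2⟫_ℂ * ⟪ψ q.2, φ p.1⟫_ℂ * ⟪φ p.1, ψ p.2⟫_ℂ := by
  simp only [crossCoeffs, overlapDiag, mul_diagonal, conjTranspose_apply, of_apply, star_mul',
    RCLike.star_def, inner_conj_symm]
  ring

lemma natCast_smul_crossTerms (φ ψ : Ω → H) :
    (d : ℂ) • ((overlapDiag φ ψ)ᴴ * crossCoeffs φ ψ + (crossCoeffs φ ψ)ᴴ * overlapDiag φ ψ) =
      (2 : ℂ) • (haagerup d φ ψ).map (↑) := by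
  ext p q
  -- `X := Mᴴ D` is symmetric, so the entries of `Xᴴ + X` are `2 Re X`.
  have hsymm : ((crossCoeffs φ ψ)ᴴ * overlapDiag φ ψ) q p =
      ((crossCoeffs φ ψ)ᴴ * overlapDiag φ ψ) p q := by
    simp only [conjTranspose_crossCoeffs_mul_overlapDiag_apply]
    ring
  have hconj : (overlapDiag φ ψ)ᴴ * crossCoeffs φ ψ = ((crossCoeffs φ ψ)ᴴ * overlapDiag φ ψ)ᴴ := by
    rw [conjTranspose_mul, conjTranspose_conjTranspose]
  rw [hconj]
  simp only [Matrix.smul_apply, Matrix.add_apply, conjTranspose_apply, hsymm, map_apply, haagerup,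
    smul_eq_mul]
  rw [← conjTranspose_crossCoeffs_mul_overlapDiag_apply, Complex.ofReal_mul, Complex.re_eq_add_conj,
    Complex.ofReal_natCast, RCLike.star_def]
  ring

lemma conjTranspose_jordanCoeffs_mul_self {φ ψ : OrthonormalBasis Ω ℂ H} (h : IsUnbiased d φ ψ)
    (hd : d ≠ 0) :
    (jordanCoeffs φ ψ)ᴴ * jordanCoeffs φ ψ = (2 * d : ℂ)⁻¹ • (1 + haagerup d φ ψ).map (↑) := by
  set D := overlapDiag φ ψ
  set M := crossCoeffs φ ψ
  have hcross : Dᴴ * M + Mᴴ * D = (d : ℂ)⁻¹ • (2 : ℂ) • (haagerup d φ ψ).map (↑) := by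
    rw [← natCast_smul_crossTerms, inv_smul_smul₀ (Nat.cast_ne_zero.2 hd)]
  have hexpand : (jordanCoeffs φ ψ)ᴴ * jordanCoeffs φ ψ =
      (1 / 4 : ℂ) • (Dᴴ * D + Mᴴ * M + (Dᴴ * M + Mᴴ * D)) := by
    simp only [jordanCoeffs, conjTranspose_smul, conjTranspose_add, smul_mul_smul_comm, add_mul,
      mul_add, RCLike.star_def, map_div₀, map_one, map_ofNat]
    module
  rw [hexpand, hcross, conjTranspose_overlapDiag_mul_self h, conjTranspose_crossCoeffs_mul_self h,
    Matrix.map_add _ Complex.ofReal_add, Matrix.map_one _ Complex.ofReal_zero Complex.ofReal_one]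
  module

lemma det_jordanCoeffs_ne_zero_iff {φ ψ : OrthonormalBasis Ω ℂ H} (h : IsUnbiased d φ ψ) :
    (jordanCoeffs φ ψ).det ≠ 0 ↔ (1 + haagerup d φ ψ).det ≠ 0 := by
  rcases isEmpty_or_nonempty Ω with hΩ | hΩ
  · simp [det_isEmpty]
  have hd := h.ne_zero
  have hdet : star (jordanCoeffs φ ψ).det * (jordanCoeffs φ ψ).det =
      (2 * d : ℂ)⁻¹ ^ Fintype.card (Ω × Ω) * ((1 + haagerup d φ ψ).det : ℂ) := by
    rw [← det_conjTranspose, ← det_mul, conjTranspose_jordanCoeffs_mul_self h hd, det_smul,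
      ← Complex.ofRealHom_eq_coe, RingHom.map_det]
    rfl
  have hscalar : (2 * d : ℂ)⁻¹ ^ Fintype.card (Ω × Ω) ≠ 0 := by simp [hd]
  rw [← Complex.ofReal_ne_zero,
    ← mul_ne_zero_iff_left hscalar (b := ((1 + haagerup d φ ψ).det : ℂ)), ← hdet,
    mul_ne_zero_iff, star_ne_zero, and_self]

end

theorem jordan_products_linearIndependent_iff_haagerup_general
    {H : Type*} [NormedAddCommGroup H] [InnerProductSpace ℂ H]
    {Ω : Type*} [Fintype Ω] [DecidableEq Ω]
    (d : ℕ)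
    (φ ψ : OrthonormalBasis Ω ℂ H)
    (hMUB : ∀ x y : Ω, ‖⟪φ x, ψ y⟫_ℂ‖ = 1 / Real.sqrt d) :
    LinearIndependent ℂ (fun p : Ω × Ω => (1 / 2 : ℝ) •
        (outer (φ p.1) * outer (ψ p.2) + outer (ψ p.2) * outer (φ p.1)) : Ω × Ω → H →L[ℂ] H)
      ↔ ¬ Module.End.HasEigenvalue
          (Matrix.toLin' (haagerup d (fun x => φ x) (fun y => ψ y))) (-1) := by
  rw [hasEigenvalue_toLin'_iff_det_sub_eq_zero, neg_one_smul, sub_neg_eq_add, add_comm]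
  exact (linearIndependent_jordanProduct_outer_iff φ ψ).trans (det_jordanCoeffs_ne_zero_iff hMUB)

theorem jordan_products_linearIndependent_iff_haagerup
    {H : Type*} [NormedAddCommGroup H] [InnerProductSpace ℂ H] [FiniteDimensional ℂ H]
    {Ω : Type*} [Fintype Ω] [DecidableEq Ω]
    (d : ℕ) (hcard : Fintype.card Ω = d) (hdim : Module.finrank ℂ H = d)
    (φ ψ : OrthonormalBasis Ω ℂ H)
    (hMUB : ∀ x y : Ω, ‖⟪φ x, ψ y⟫_ℂ‖ = 1 / Real.sqrt d) :
    LinearIndependent ℂ (fun p : Ω × Ω => (1 / 2 : ℝ) •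
        (outer (φ p.1) * outer (ψ p.2) + outer (ψ p.2) * outer (φ p.1)) : Ω × Ω → H →L[ℂ] H)
      ↔ ¬ Module.End.HasEigenvalue
          (Matrix.toLin' (haagerup d (fun x => φ x) (fun y => ψ y))) (-1) :=
  jordan_products_linearIndependent_iff_haagerup_general d φ ψ hMUB
end
end
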